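/- arXiv:2303.15895 — 3 statements merged into one kernel-verified Lean document; each statement's English description precedes it below -/
import Mathlib

section
/- Define p̄(0) = 1 and p̄(n) = 0 for every integer n < 0. Then for every integer n ≥ 1 the overpartition function satisfies the recurrence p̄(n) = 2·∑_{k=1}^{∞} (−1)^{k+1} p̄(n − k²) (the sum is finite since p̄ vanishes on negative arguments; it may be taken over 1 ≤ k ≤ ⌊√n⌋). -/
/-- The overpartition function: `p̄(n) = ∑_{k=0}^{n} d(k) * p(n-k)`, where `d(k)` is the
number of partitions of `k` into distinct parts and `p(m)` is the number of partitions. -/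
noncomputable def overpartition (n : ℕ) : ℕ :=
  ∑ k ∈ Finset.range (n + 1),
    (Nat.Partition.distincts k).card * Fintype.card (Nat.Partition (n - k))

/-- Extension of the overpartition function to `ℤ`, with `p̄(m) = 0` for `m < 0`. -/
noncomputable def pbarZ (m : ℤ) : ℤ :=
  if m < 0 then 0 else overpartition m.toNat

/-!
The generating function of overpartitions is `∏ᵢ (1 + qⁱ⁺¹) / (1 - qⁱ⁺¹)`, and the recurrence
says that it is inverse to the theta series `θ(q) = 1 + 2 ∑_{k ≥ 1} (-1)ᵏ q^{k²}`. By Gauss's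
identity `θ = (q²; q²)_∞ (q; q²)_∞²`, and since `(q; q)_∞ = (q; q²)_∞ (q²; q²)_∞` and
`(-q; q)_∞ (q; q)_∞ = (q²; q²)_∞`, the product `θ · ∏ (1 + qⁱ⁺¹) / (1 - qⁱ⁺¹)` collapses to `1`.

Gauss's identity is the limit of a finite one. Cauchy's `q`-binomial theorem in base `q²` at
`x = q^{2m-1}`, `y = 1` gives `(q; q²)_m² = ∑_{|k| ≤ m} (-1)ᵏ q^{k²} [2m, m + k]_{q²}`, and
`(q²; q²)_m [2m, m + k]_{q²} ≡ 1` modulo `q^{2(m - |k| + 1)}`; hence `(q²; q²)_m (q; q²)_m²` agrees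
with `θ` up to `q^{2m}`.
-/

open Finset PowerSeries Filter Topology
open scoped PowerSeries.WithPiTopology

theorem dvd_mul_sub_one {R : Type*} [CommRing R] {p x y : R} (hx : p ∣ x - 1) (hy : p ∣ y - 1) :
    p ∣ x * y - 1 := by
  rw [show x * y - 1 = (x - 1) * y + (y - 1) by ring]
  exact dvd_add (dvd_mul_of_dvd_left hx y) hy

theorem sum_range_natAbs_sub {M : Type*} [AddCommMonoid M] (f : ℕ → M) (m : ℕ) :
    ∑ j ∈ range (2 * m + 1), f ((j : ℤ) - m).natAbs = f 0 + 2 • ∑ k ∈ Icc 1 m, f k := by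
  have hIcc : ∑ k ∈ Icc 1 m, f k = ∑ i ∈ range m, f (i + 1) := by
    rw [← Ico_add_one_right_eq_Icc, sum_Ico_eq_sum_range]
    simp [add_comm]
  rw [show 2 * m + 1 = m + (m + 1) by ring, sum_range_add, ← sum_range_reflect, sum_range_succ',
    hIcc, two_nsmul]
  have h₁ : ∀ i ∈ range m, f (((m - 1 - i : ℕ) : ℤ) - m).natAbs = f (i + 1) := by
    intro i hi
    rw [mem_range] at hi
    congr 1
    omega
  have h₂ : ∀ i ∈ range m, f (((m + (i + 1) : ℕ) : ℤ) - m).natAbs = f (i + 1) := by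
    intro i _
    congr 1
    omega
  rw [sum_congr rfl h₁, sum_congr rfl h₂]
  simp only [add_zero, sub_self, Int.natAbs_zero]
  abel

section QAnalogues

variable {R : Type*} [CommRing R]

/-- The `q`-Pochhammer symbol `(a; q)ₙ`. -/
def qPochhammer (a q : R) (n : ℕ) : R := ∏ i ∈ range n, (1 - a * q ^ i)

def qBinomial (q : R) : ℕ → ℕ → R
  | _, 0 => 1
  | 0, _ + 1 => 0
  | n + 1, j + 1 => qBinomial q n j + q ^ (j + 1) * qBinomial q n (j + 1)

theorem dvd_qPochhammer_sub_one (a q : R) (n : ℕ) : a ∣ qPochhammer a q n - 1 :=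
  prod_induction _ (fun x ↦ a ∣ x - 1) (fun _ _ ↦ dvd_mul_sub_one) (by simp)
    fun i _ ↦ ⟨-q ^ i, by ring⟩

variable (q : R)

@[simp]
theorem qPochhammer_zero (a : R) : qPochhammer a q 0 = 1 :=
  prod_range_zero _

theorem qPochhammer_succ (a : R) (n : ℕ) :
    qPochhammer a q (n + 1) = qPochhammer a q n * (1 - a * q ^ n) :=
  prod_range_succ _ _

theorem qPochhammer_add (a : R) (m n : ℕ) :
    qPochhammer a q (m + n) = qPochhammer a q m * qPochhammer (a * q ^ m) q n := by
  simp only [qPochhammer, prod_range_add, pow_add, mul_assoc]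

@[simp]
theorem qBinomial_zero_right (n : ℕ) : qBinomial q n 0 = 1 := by
  cases n <;> rfl

theorem qBinomial_succ_succ (n j : ℕ) :
    qBinomial q (n + 1) (j + 1) = qBinomial q n j + q ^ (j + 1) * qBinomial q n (j + 1) :=
  rfl

theorem qBinomial_eq_zero_of_lt : ∀ {n j : ℕ}, n < j → qBinomial q n j = 0
  | 0, _ + 1, _ => rfl
  | n + 1, j + 1, h => by
    rw [qBinomial_succ_succ, qBinomial_eq_zero_of_lt (by omega),
      qBinomial_eq_zero_of_lt (by omega), mul_zero, add_zero]

theorem qBinomial_mul_qPochhammer {n j : ℕ} (hj : j ≤ n) :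
    qBinomial q n j * (qPochhammer q q j * qPochhammer q q (n - j)) = qPochhammer q q n := by
  induction n generalizing j with
  | zero =>
    obtain rfl : j = 0 := by omega
    simp
  | succ n ih =>
    cases j with
    | zero => simp
    | succ j =>
      rcases (show j = n ∨ j + 1 ≤ n by omega) with rfl | hjn
      · have h := ih (j := j) le_rfl
        rw [qBinomial_succ_succ, qBinomial_eq_zero_of_lt q (Nat.lt_succ_self j), Nat.sub_self]
        rw [Nat.sub_self] at h
        simp only [qPochhammer_succ, qPochhammer_zero, mul_one] at h ⊢
        linear_combination (1 - q * q ^ j) * h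
      · obtain ⟨c, rfl⟩ : ∃ c, n = j + 1 + c := ⟨n - (j + 1), by omega⟩
        have h₁ := ih (j := j) (by omega)
        have h₂ := ih hjn
        rw [show j + 1 + c - j = c + 1 by omega] at h₁
        rw [show j + 1 + c - (j + 1) = c by omega] at h₂
        rw [show j + 1 + c + 1 - (j + 1) = c + 1 by omega, qBinomial_succ_succ]
        simp only [qPochhammer_succ] at h₁ h₂ ⊢
        linear_combination (1 - q * q ^ j) * h₁ + q ^ (j + 1) * (1 - q * q ^ c) * h₂

theorem prod_sub_pow_mul_eq_sum_qBinomial (x y : R) (n : ℕ) :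
    ∏ i ∈ range n, (x - q ^ i * y) =
      ∑ j ∈ range (n + 1), (-1) ^ j * q ^ j.choose 2 * qBinomial q n j * x ^ (n - j) * y ^ j := by
  induction n generalizing y with
  | zero => simp
  | succ n ih =>
    set S := ∑ j ∈ range (n + 1),
      (-1) ^ j * q ^ j.choose 2 * qBinomial q n j * x ^ (n - j) * (q * y) ^ j
    set g : ℕ → R := fun j ↦
      (-1) ^ j * q ^ j.choose 2 * q ^ j * qBinomial q n j * x ^ (n + 1 - j) * y ^ j
    have hx : ∑ j ∈ range (n + 2), g j = x * S := by
      rw [sum_range_succ, mul_sum]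
      simp only [g, qBinomial_eq_zero_of_lt q (Nat.lt_succ_self n), mul_zero, zero_mul, add_zero]
      refine sum_congr rfl fun j hj ↦ ?_
      rw [show n + 1 - j = n - j + 1 by grind]
      ring
    have hy : ∑ j ∈ range (n + 1),
        (-1) ^ (j + 1) * q ^ (j + 1).choose 2 * qBinomial q n j * x ^ (n - j) * y ^ (j + 1) =
          -(y * S) := by
      rw [mul_sum, ← sum_neg_distrib]
      refine sum_congr rfl fun j _ ↦ ?_
      rw [Nat.choose_succ_succ', Nat.choose_one_right]
      ring
    have hprod : ∏ i ∈ range n, (x - q ^ (i + 1) * y) = S := by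
      simp only [pow_succ, mul_assoc, ih, S]
    rw [prod_range_succ', hprod, sum_range_succ',
      show S * (x - q ^ 0 * y) = x * S + -(y * S) by ring, ← hx, ← hy, sum_range_succ' g]
    rw [add_right_comm, ← sum_add_distrib]
    congr 1
    · refine sum_congr rfl fun j _ ↦ ?_
      simp only [g, qBinomial_succ_succ, Nat.add_sub_add_right]
      ring
    · simp [g]

end QAnalogues

section FiniteGauss

variable {R : Type*} [CommRing R]

theorem isUnit_qPochhammer {a : R⟦X⟧} (ha : constantCoeff a = 0) (q : R⟦X⟧) (n : ℕ) :
    IsUnit (qPochhammer a q n) := by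
  simp [isUnit_iff_constantCoeff, qPochhammer, ha]

theorem X_pow_dvd_qPochhammer_mul_qBinomial_sub_one {m j : ℕ} (hj : j ≤ 2 * m) :
    (X : R⟦X⟧) ^ (2 * (min j (2 * m - j) + 1)) ∣
      qPochhammer (X ^ 2) (X ^ 2) m * qBinomial (X ^ 2) (2 * m) j - 1 := by
  set F := qPochhammer (X ^ 2 : R⟦X⟧) (X ^ 2)
  set B := qBinomial (X ^ 2 : R⟦X⟧) (2 * m) j
  have hsplit (s d : ℕ) : ∃ u, F (s + d) = F s * u ∧ (X : R⟦X⟧) ^ (2 * (s + 1)) ∣ u - 1 :=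
    ⟨_, qPochhammer_add _ _ _ _, by
      simpa [← pow_mul, ← pow_add, mul_add, add_comm] using dvd_qPochhammer_sub_one _ (X ^ 2) d⟩
  -- for `{s, t} = {j, 2m - j}`, `F m * B` is the product of the tails `F m / F s`, `F (2m) / F t`
  have key (s t : ℕ) (hsm : s ≤ m) (hst : s + t = 2 * m) (hB : B * (F s * F t) = F (2 * m)) :
      (X : R⟦X⟧) ^ (2 * (s + 1)) ∣ F m * B - 1 := by
    obtain ⟨u, hu, hu1⟩ := hsplit s (m - s)
    obtain ⟨v, hv, hv1⟩ := hsplit t (2 * m - t)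
    rw [Nat.add_sub_cancel' hsm] at hu
    rw [Nat.add_sub_cancel' (by omega)] at hv
    have hBv : B * F s = v :=
      (isUnit_qPochhammer (a := X ^ 2) (by simp) (X ^ 2) t).mul_left_cancel <| by
        rw [← hv, ← hB]
        ring
    rw [hu, show F s * u * B = u * (B * F s) by ring, hBv]
    exact dvd_mul_sub_one hu1 ((pow_dvd_pow X (by omega)).trans hv1)
  have hfact : B * (F j * F (2 * m - j)) = F (2 * m) := qBinomial_mul_qPochhammer _ hj
  rcases le_total j m with hjm | hmj
  · rw [min_eq_left (by omega)]
    exact key j (2 * m - j) hjm (by omega) hfact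
  · rw [min_eq_right (by omega)]
    exact key (2 * m - j) j (by omega) (by omega) (by rw [mul_comm (F _)]; exact hfact)

theorem prod_range_X_pow_sub_X_sq_pow (k : ℕ) :
    ∏ i ∈ range (2 * (k + 1)), ((X : R⟦X⟧) ^ (2 * k + 1) - (X ^ 2) ^ i) =
      (-1) ^ (k + 1) * X ^ ((k + 1) * (3 * k + 1)) * qPochhammer X (X ^ 2) (k + 1) ^ 2 := by
  set m := k + 1
  have hG : qPochhammer (X : R⟦X⟧) (X ^ 2) m = ∏ i ∈ range m, (1 - X * (X ^ 2) ^ i) := rfl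
  have hlow : ∏ i ∈ range m, ((X : R⟦X⟧) ^ (2 * k + 1) - (X ^ 2) ^ i) =
      (-1) ^ m * X ^ (m * k) * qPochhammer X (X ^ 2) m := by
    rw [← prod_range_reflect]
    have h (i : ℕ) (hi : i ∈ range m) : (X : R⟦X⟧) ^ (2 * k + 1) - (X ^ 2) ^ (m - 1 - i) =
        (-1) * X ^ (2 * (k - i)) * (1 - X * (X ^ 2) ^ i) := by
      rw [mem_range] at hi
      rw [show 2 * k + 1 = 2 * (k - i) + 2 * i + 1 by omega, show m - 1 - i = k - i by omega]
      ring
    rw [prod_congr rfl h, prod_mul_distrib, prod_mul_distrib, prod_const, card_range,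
      prod_pow_eq_pow_sum, ← hG, ← mul_sum, ← sum_range_reflect]
    rw [sum_congr rfl fun j hj ↦ show k - (m - 1 - j) = j by grind, mul_comm 2,
      sum_range_id_mul_two, show m - 1 = k from rfl]
  have hhigh : ∏ i ∈ range m, ((X : R⟦X⟧) ^ (2 * k + 1) - (X ^ 2) ^ (m + i)) =
      X ^ ((2 * k + 1) * m) * qPochhammer X (X ^ 2) m := by
    rw [hG, pow_mul, show ((X : R⟦X⟧) ^ (2 * k + 1)) ^ m = ∏ _i ∈ range m, X ^ (2 * k + 1) by simp,
      ← prod_mul_distrib]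
    refine prod_congr rfl fun i _ ↦ ?_
    ring
  rw [two_mul, prod_range_add, hlow, hhigh]
  ring

theorem sq_qPochhammer_X_eq_sum_qBinomial (m : ℕ) :
    qPochhammer (X : R⟦X⟧) (X ^ 2) m ^ 2 =
      ∑ j ∈ range (2 * m + 1), (-1) ^ ((j : ℤ) - m).natAbs * X ^ (((j : ℤ) - m).natAbs ^ 2) *
        qBinomial (X ^ 2) (2 * m) j := by
  obtain _ | k := m
  · simp [qPochhammer]
  set m := k + 1 with hm
  have hc := prod_sub_pow_mul_eq_sum_qBinomial (X ^ 2 : R⟦X⟧) (X ^ (2 * k + 1)) 1 (2 * m)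
  simp only [mul_one, one_pow] at hc
  -- each term of Cauchy's sum is `(-1)^m X^(m(3k+1))` times the corresponding term here
  have hterm (j : ℕ) (hj : j ∈ range (2 * m + 1)) :
      (-1) ^ j * (X ^ 2) ^ j.choose 2 * qBinomial (X ^ 2) (2 * m) j *
        (X ^ (2 * k + 1)) ^ (2 * m - j) = (-1) ^ m * X ^ (m * (3 * k + 1)) *
          ((-1) ^ ((j : ℤ) - m).natAbs * X ^ (((j : ℤ) - m).natAbs ^ 2) *
            qBinomial (X ^ 2 : R⟦X⟧) (2 * m) j) := by
    rw [mem_range] at hj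
    obtain ⟨d, hd⟩ : ∃ d, ((j : ℤ) - m).natAbs = d := ⟨_, rfl⟩
    have hjd : j = m + d ∨ j + d = m := by omega
    have hsign : (-1 : R⟦X⟧) ^ j = (-1) ^ m * (-1) ^ d := by
      rcases hjd with h | h
      · rw [h, pow_add]
      · rw [← h, pow_add, mul_assoc, ← pow_add, ← two_mul, pow_mul, neg_one_sq, one_pow, mul_one]
    have hexp : 2 * j.choose 2 + (2 * k + 1) * (2 * m - j) = m * (3 * k + 1) + d ^ 2 := by
      have hd' : (d : ℚ) ^ 2 = ((j : ℚ) - m) ^ 2 := by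
        rcases hjd with h | h
        · rw [h]; push_cast; ring
        · rw [← h]; push_cast; ring
      qify [Nat.cast_choose_two, Nat.cast_sub (show j ≤ 2 * m by omega)]
      rw [hd', hm]
      push_cast
      ring
    have hX : (X : R⟦X⟧) ^ (m * (3 * k + 1)) * X ^ (d ^ 2) =
        (X ^ 2) ^ j.choose 2 * (X ^ (2 * k + 1)) ^ (2 * m - j) := by
      rw [← pow_add, ← pow_mul, ← pow_mul, ← pow_add, ← hexp]
    rw [hd, hsign]
    linear_combination (-(-1) ^ m * (-1) ^ d * qBinomial (X ^ 2 : R⟦X⟧) (2 * m) j) * hX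
  rw [prod_range_X_pow_sub_X_sq_pow, sum_congr rfl hterm, ← mul_sum] at hc
  refine (isUnit_one.neg.pow m).mul_left_cancel (X_pow_mul_cancel (k := m * (3 * k + 1)) ?_)
  linear_combination hc

variable (R) in
noncomputable def thetaPartial (m : ℕ) : R⟦X⟧ := 1 + 2 * ∑ k ∈ Icc 1 m, (-1) ^ k * X ^ (k ^ 2)

theorem X_pow_dvd_qPochhammer_mul_sq_sub_thetaPartial (m : ℕ) :
    (X : R⟦X⟧) ^ (2 * m + 1) ∣
      qPochhammer (X ^ 2) (X ^ 2) m * qPochhammer X (X ^ 2) m ^ 2 - thetaPartial R m := by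
  have htheta : thetaPartial R m = ∑ j ∈ range (2 * m + 1),
      (-1) ^ ((j : ℤ) - m).natAbs * X ^ (((j : ℤ) - m).natAbs ^ 2) := by
    rw [sum_range_natAbs_sub (fun k ↦ (-1 : R⟦X⟧) ^ k * X ^ (k ^ 2)), thetaPartial, nsmul_eq_mul]
    simp
  rw [sq_qPochhammer_X_eq_sum_qBinomial, htheta, mul_sum, ← sum_sub_distrib]
  refine dvd_sum fun j hj ↦ ?_
  rw [mem_range] at hj
  set e := ((j : ℤ) - m).natAbs
  have hmin : 2 * m + 1 ≤ e ^ 2 + 2 * (min j (2 * m - j) + 1) := by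
    -- `e² + 2 (m - e + 1) = (e - 1)² + 2m + 1`
    rw [show min j (2 * m - j) = m - e by omega]
    rcases Nat.eq_zero_or_pos e with he | he
    · simp [he]
    · have : e ≤ m := by omega
      zify [this]
      nlinarith
  rw [show qPochhammer (X ^ 2) (X ^ 2) m * ((-1) ^ e * X ^ (e ^ 2) * qBinomial (X ^ 2) (2 * m) j) -
      (-1) ^ e * X ^ (e ^ 2) = (-1) ^ e * (X ^ (e ^ 2) *
        (qPochhammer (X ^ 2) (X ^ 2) m * qBinomial (X ^ 2 : R⟦X⟧) (2 * m) j - 1)) by ring]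
  exact Dvd.dvd.mul_left ((pow_dvd_pow X hmin).trans (pow_add (X : R⟦X⟧) _ _ ▸
    mul_dvd_mul_left _ (X_pow_dvd_qPochhammer_mul_qBinomial_sub_one (by omega)))) _

theorem X_pow_dvd_thetaPartial_sub {s m : ℕ} (h : s ≤ m) :
    (X : R⟦X⟧) ^ ((s + 1) ^ 2) ∣ thetaPartial R m - thetaPartial R s := by
  have hIoc (m : ℕ) : Icc 1 m = Ioc 0 m := Icc_add_one_left_eq_Ioc 0 m
  rw [thetaPartial, thetaPartial, hIoc, hIoc, ← sum_Ioc_consecutive _ (Nat.zero_le s) h,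
    add_sub_add_left_eq_sub, ← mul_sub, add_sub_cancel_left]
  refine dvd_mul_of_dvd_right (dvd_sum fun k hk ↦ dvd_mul_of_dvd_right (pow_dvd_pow X ?_) _) _
  exact Nat.pow_le_pow_left (mem_Ioc.mp hk).1 2

theorem coeff_thetaPartial_mul (φ : R⟦X⟧) {m n : ℕ} (h : m ^ 2 ≤ n) :
    coeff n (thetaPartial R m * φ) =
      coeff n φ + 2 * ∑ k ∈ Icc 1 m, (-1) ^ k * coeff (n - k ^ 2) φ := by
  simp only [thetaPartial, add_mul, one_mul, map_add, mul_sum, sum_mul, map_sum, mul_assoc]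
  congr 1
  refine sum_congr rfl fun k hk ↦ ?_
  have hk : k ^ 2 ≤ n := (Nat.pow_le_pow_left (mem_Icc.mp hk).2 2).trans h
  rw [← mul_assoc, show (2 * (-1) ^ k : R⟦X⟧) = C (2 * (-1) ^ k) by simp [map_ofNat],
    coeff_C_mul, coeff_X_pow_mul', if_pos hk, mul_assoc]

end FiniteGauss

section Topology

variable {R : Type*} [CommRing R] [TopologicalSpace R]

theorem tendsto_zero_of_X_pow_dvd {g : ℕ → R⟦X⟧} {N : ℕ → ℕ} (hN : Tendsto N atTop atTop)
    (hg : ∀ m, X ^ N m ∣ g m) : Tendsto g atTop (𝓝 0) := by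
  rw [WithPiTopology.tendsto_iff_coeff_tendsto]
  intro d
  rw [map_zero]
  exact tendsto_const_nhds.congr'
    ((hN.eventually_gt_atTop d).mono fun m hm ↦ (X_pow_dvd_iff.mp (hg m) d hm).symm)

theorem multipliable_one_sub_mul_pow {q : R⟦X⟧} (hq : constantCoeff q = 0) (a : R⟦X⟧) :
    Multipliable fun i ↦ 1 - a * q ^ i := by
  simp_rw [sub_eq_add_neg]
  refine WithPiTopology.multipliable_one_add_of_tendsto_order_atTop_nhds_top R ?_
  refine ENat.tendsto_nhds_top_iff_natCast_lt.mpr fun n ↦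
    eventually_atTop.mpr ⟨n + 1, fun i hi ↦ ?_⟩
  rw [order_neg]
  calc (n : ℕ∞) < i := by exact_mod_cast hi
    _ ≤ order (q ^ i) := le_order_pow_of_constantCoeff_eq_zero i hq
    _ ≤ order a + order (q ^ i) := le_add_self
    _ ≤ order (a * q ^ i) := le_order_mul _ _

theorem tendsto_qPochhammer {q : R⟦X⟧} (hq : constantCoeff q = 0) (a : R⟦X⟧) :
    Tendsto (qPochhammer a q) atTop (𝓝 (∏' i, (1 - a * q ^ i))) :=
  (multipliable_one_sub_mul_pow hq a).hasProd.tendsto_prod_nat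

theorem tendsto_thetaPartial [IsTopologicalRing R] :
    Tendsto (thetaPartial R) atTop
      (𝓝 ((∏' i, (1 - X ^ 2 * (X ^ 2) ^ i)) * (∏' i, (1 - X * (X ^ 2) ^ i)) ^ 2)) := by
  have hq : constantCoeff (X ^ 2 : R⟦X⟧) = 0 := by simp
  have hdiff := tendsto_zero_of_X_pow_dvd
    (tendsto_atTop_mono (fun m ↦ show m ≤ 2 * m + 1 by omega) tendsto_id)
    (X_pow_dvd_qPochhammer_mul_sq_sub_thetaPartial (R := R))
  simpa only [sub_zero] using
    (((tendsto_qPochhammer hq (X ^ 2)).mul ((tendsto_qPochhammer hq X).pow 2)).sub hdiff).congr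
      fun m ↦ sub_sub_cancel _ _

theorem coeff_thetaPartial_sqrt_mul_of_tendsto [T2Space R] {φ ψ : R⟦X⟧}
    (h : Tendsto (fun m ↦ thetaPartial R m * φ) atTop (𝓝 ψ)) (n : ℕ) :
    coeff n (thetaPartial R n.sqrt * φ) = coeff n ψ := by
  refine tendsto_nhds_unique (tendsto_const_nhds.congr' ?_)
    ((WithPiTopology.continuous_coeff R n).tendsto ψ |>.comp h)
  refine eventually_atTop.mpr ⟨n.sqrt, fun m hm ↦ ?_⟩
  have hdvd := (X_pow_dvd_thetaPartial_sub (R := R) hm).mul_right φ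
  rw [sub_mul, X_pow_dvd_iff] at hdvd
  have := hdvd n (by simpa [sq] using Nat.lt_succ_sqrt n)
  rw [map_sub, sub_eq_zero] at this
  exact this.symm

theorem tprod_one_sub_mul_pow_eq_mul [T2Space R] [IsTopologicalRing R] {q : R⟦X⟧}
    (hq : constantCoeff q = 0) (a : R⟦X⟧) :
    ∏' i, (1 - a * q ^ i) = (∏' i, (1 - a * (q ^ 2) ^ i)) * ∏' i, (1 - a * q * (q ^ 2) ^ i) := by
  have hq2 : constantCoeff (q ^ 2) = 0 := by simp [hq]
  have he : HasProd (fun i ↦ 1 - a * q ^ (2 * i)) (∏' i, (1 - a * (q ^ 2) ^ i)) := by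
    simpa only [pow_mul] using (multipliable_one_sub_mul_pow hq2 a).hasProd
  have ho : HasProd (fun i ↦ 1 - a * q ^ (2 * i + 1)) (∏' i, (1 - a * q * (q ^ 2) ^ i)) := by
    convert (multipliable_one_sub_mul_pow hq2 (a * q)).hasProd using 3 with i
    ring
  exact (HasProd.even_mul_odd (f := fun i ↦ 1 - a * q ^ i) he ho).tprod_eq

theorem tprod_one_add_mul_pow_mul_tprod_one_sub [T2Space R] [IsTopologicalRing R] {q : R⟦X⟧}
    (hq : constantCoeff q = 0) (a : R⟦X⟧) :
    (∏' i, (1 + a * q ^ i)) * ∏' i, (1 - a * q ^ i) = ∏' i, (1 - a ^ 2 * (q ^ 2) ^ i) := by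
  have hplus : Multipliable fun i ↦ 1 + a * q ^ i := by
    simpa using multipliable_one_sub_mul_pow hq (-a)
  rw [← hplus.tprod_mul (multipliable_one_sub_mul_pow hq a)]
  exact tprod_congr fun i ↦ by ring

end Topology

section Partitions

variable (R : Type*) [CommRing R]

theorem mk_overpartition_eq_mul :
    (PowerSeries.mk fun n ↦ (overpartition n : R)) =
      (PowerSeries.mk fun n ↦ (#(Nat.Partition.distincts n) : R)) *
        PowerSeries.mk fun n ↦ (Fintype.card n.Partition : R) := by
  ext n
  rw [coeff_mul, Finset.Nat.sum_antidiagonal_eq_sum_range_succ_mk, coeff_mk, overpartition]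
  simp

variable [TopologicalSpace R] [T2Space R] [IsTopologicalRing R]

theorem mk_card_partition_mul_tprod_one_sub_X_mul_X_pow :
    (PowerSeries.mk fun n ↦ (Fintype.card n.Partition : R)) * ∏' i, (1 - X * X ^ i) = 1 := by
  have hP := Nat.Partition.hasProd_powerSeriesMk_card_restricted R (fun _ ↦ True)
  simp only [if_true, Nat.Partition.restricted, implies_true, filter_true, card_univ] at hP
  have hterm (i : ℕ) : (∑' j, (X : R⟦X⟧) ^ ((i + 1) * j)) * (1 - X * X ^ i) = 1 := by
    simp_rw [← pow_succ', pow_mul]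
    exact WithPiTopology.tsum_pow_mul_one_sub_of_constantCoeff_eq_zero (by simp)
  have h := hP.mul (multipliable_one_sub_mul_pow constantCoeff_X X).hasProd
  simp only [hterm] at h
  exact h.unique hasProd_one

theorem tprod_mul_sq_tprod_mul_mk_overpartition :
    (∏' i, (1 - X ^ 2 * (X ^ 2) ^ i)) * (∏' i, (1 - X * (X ^ 2) ^ i)) ^ 2 *
      PowerSeries.mk (fun n ↦ (overpartition n : R)) = 1 := by
  have hX : constantCoeff (X : R⟦X⟧) = 0 := constantCoeff_X
  have hD : ∏' i, (1 + X * X ^ i) = PowerSeries.mk fun n ↦ (#(Nat.Partition.distincts n) : R) := by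
    have h := Nat.Partition.hasProd_powerSeriesMk_card_countRestricted R (m := 2) (by norm_num)
    simp only [Nat.Partition.countRestricted_two, sum_range_succ, range_one, sum_singleton,
      mul_zero, pow_zero, mul_one, pow_succ'] at h
    exact h.tprod_eq
  have hDA := hD ▸ tprod_one_add_mul_pow_mul_tprod_one_sub hX X
  have hA := tprod_one_sub_mul_pow_eq_mul hX X
  rw [← sq] at hA
  have hPA := mk_card_partition_mul_tprod_one_sub_X_mul_X_pow R
  rw [mk_overpartition_eq_mul]
  set O := ∏' i, (1 - X * (X ^ 2 : R⟦X⟧) ^ i)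
  set D := PowerSeries.mk fun n ↦ (#(Nat.Partition.distincts n) : R)
  set P := PowerSeries.mk fun n ↦ (Fintype.card n.Partition : R)
  -- with `A = (q; q)_∞`, `E = (q²; q²)_∞`: `E O² D P = O (D (O E)) P = O E P = A P = 1`
  linear_combination (O * P) * hDA + hPA - (O * P * D + P) * hA

end Partitions

/-- For every `n ≥ 1`,
`p̄(n) = 2 ∑_{k=1}^{⌊√n⌋} (-1)^{k+1} p̄(n - k²)`. -/
theorem overpartition_recurrence (n : ℕ) (hn : 1 ≤ n) :
    (overpartition n : ℤ) =
      2 * ∑ k ∈ Finset.Icc 1 (Nat.sqrt n),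
        (-1 : ℤ) ^ (k + 1) * pbarZ ((n : ℤ) - (k : ℤ) ^ 2) := by
  have hlim : Tendsto (fun m ↦ thetaPartial ℤ m * PowerSeries.mk fun n ↦ (overpartition n : ℤ))
      atTop (𝓝 1) := by
    simpa [tprod_mul_sq_tprod_mul_mk_overpartition] using
      tendsto_thetaPartial.mul_const (PowerSeries.mk fun n ↦ (overpartition n : ℤ))
  have hcoeff := coeff_thetaPartial_sqrt_mul_of_tendsto hlim n
  rw [coeff_thetaPartial_mul _ (Nat.sqrt_le' n), coeff_one, if_neg (by omega)] at hcoeff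
  simp only [coeff_mk] at hcoeff
  have hpbar (k : ℕ) (hk : k ∈ Icc 1 n.sqrt) : pbarZ (n - k ^ 2) = overpartition (n - k ^ 2) := by
    have hkn : k ^ 2 ≤ n := (Nat.pow_le_pow_left (mem_Icc.mp hk).2 2).trans (Nat.sqrt_le' n)
    rw [← Nat.cast_pow, ← Nat.cast_sub hkn, pbarZ, if_neg (by omega), Int.toNat_natCast]
  rw [sum_congr rfl fun k hk ↦ by rw [hpbar k hk]]
  simp only [pow_succ (-1 : ℤ), mul_neg_one, neg_mul, sum_neg_distrib]
  linarith
end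

section
/- Let k be an odd positive integer, let n be an integer, and let h be an integer with 0 ≤ h < k and gcd(h,k) = 1. Then the integer g_n(h,k) satisfies g_n(h,k) ≡ −6k·(h|k) + 3k·(1 + (−1|k)) (mod 8), where (·|k) denotes the Jacobi symbol. -/
/-- The Dedekind sum `s(h,k) = ∑_{r=1}^{k-1} (r/k)(hr/k - ⌊hr/k⌋ - 1/2)`. -/
def dedekindSum (h : ℤ) (k : ℕ) : ℚ :=
  ∑ r ∈ Finset.Icc 1 (k - 1),
    ((r : ℚ) / k) * ((h : ℚ) * r / k - ⌊(h : ℚ) * r / k⌋ - 1 / 2)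

/-- `ω(h,k) = e^{π i s(h,k)}`. -/
noncomputable def omegaHK (h : ℤ) (k : ℕ) : ℂ :=
  Complex.exp (Real.pi * Complex.I * (dedekindSum h k : ℂ))

/-- `Ã_k(n) = ∑_{0 ≤ h < k, gcd(h,k)=1} (ω(h,k)² / ω(2h,k)) e^{-2πinh/k}`. -/
noncomputable def Atilde (k : ℕ) (n : ℤ) : ℂ :=
  ∑ h ∈ Finset.range k,
    if Nat.gcd h k = 1 then
      (omegaHK h k) ^ 2 / omegaHK (2 * h) k *
        Complex.exp (-2 * Real.pi * Complex.I * n * h / k)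
    else 0

/-- `g_n(h,k) = 24k s(h,k) - 12k s(2h,k) - 24nh` (a priori a rational number). -/
def gfun (n h : ℤ) (k : ℕ) : ℚ :=
  24 * k * dedekindSum h k - 12 * k * dedekindSum (2 * h) k - 24 * n * h

/-!
Put `ε_r = 1` when the least residue of `hr` modulo `k` exceeds `k/2` and `ε_r = 0` otherwise.
Since `⌊2hr/k⌋ = 2⌊hr/k⌋ + ε_r`, the Dedekind sums combine to
`24k s(h,k) - 12k s(2h,k) = 12 T - 3k(k-1)` with `T = ∑_{r<k} r ε_r`, so `g_n(h,k)` is an integer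
whose class modulo `8` depends only on `k` and the parity of `T`. Pairing `r` with `k - r`
(`ε_{k-r} = 1 - ε_r`) gives `T ≡ ∑_{r ≤ k/2} (r + 1) + μ (mod 2)`, where `μ` counts the `r ≤ k/2`
with `ε_r = 1`.

It remains to prove Gauss's lemma `(h|k) = (-1)^μ` for the Jacobi symbol. By strong induction on
`k`, reduce `h` modulo `k` and replace an even residue `a` by `k - a ≡ -h`, which changes `μ` into
`k/2 - μ`. For odd `a < k`, Eisenstein's argument gives `μ(a,k) ≡ ∑_{r ≤ k/2} ⌊ar/k⌋ (mod 2)`, the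
lattice-point count under the diagonal of the rectangle `(0,k/2) × (0,a/2)` gives
`μ(a,k) + μ(k,a) ≡ (a/2)(k/2)`, and quadratic reciprocity `(a|k) = (-1)^{(a/2)(k/2)} (k|a)`
reduces the claim to the induction hypothesis for `(k|a)`.
-/

open Finset
open scoped NumberTheorySymbols

def gaussCount (h : ℤ) (k : ℕ) : ℕ :=
  #{r ∈ Icc 1 (k / 2) | (k : ℤ) < 2 * (h * (r : ℕ) % k)}

lemma gaussCount_emod_left (h : ℤ) (k : ℕ) : gaussCount (h % k) k = gaussCount h k := by
  simp [gaussCount, Int.mul_emod]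

lemma mul_div_eq_card_filter {p q r : ℕ} (hr : r ∈ Icc 1 (p / 2)) :
    r * q / p = #{s ∈ Icc 1 (q / 2) | s * p ≤ r * q} := by
  obtain ⟨hr1, hr2⟩ := mem_Icc.mp hr
  rw [ZMod.div_eq_filter_card (by omega), Nat.succ_eq_add_one, Ico_add_one_right_eq_Icc]
  calc r * q / p ≤ p / 2 * q / p := Nat.div_le_div_right (Nat.mul_le_mul_right _ hr2)
    _ ≤ q / 2 := Nat.div_mul_div_le_div _ _ _

theorem sum_mul_div_add_sum_mul_div_eq_mul_of_coprime {p q : ℕ} (hpq : p.Coprime q) :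
    ∑ r ∈ Icc 1 (p / 2), r * q / p + ∑ s ∈ Icc 1 (q / 2), s * p / q = p / 2 * (q / 2) := by
  rw [sum_congr rfl fun r hr => mul_div_eq_card_filter hr,
    sum_congr rfl fun s hs => mul_div_eq_card_filter hs]
  simp only [card_filter]
  rw [sum_comm (s := Icc 1 (q / 2)), ← sum_add_distrib]
  calc _ = ∑ r ∈ Icc 1 (p / 2), ∑ s ∈ Icc 1 (q / 2), 1 := by
        refine sum_congr rfl fun r hr => ?_
        rw [← sum_add_distrib]
        refine sum_congr rfl fun s _ => ?_
        have hr := mem_Icc.mp hr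
        -- the diagonal of the rectangle contains no lattice points
        have hne : s * p ≠ r * q := fun heq =>
          have hpr : p ∣ r := hpq.dvd_of_dvd_mul_right ⟨s, by rw [← heq, mul_comm]⟩
          (Nat.le_of_dvd hr.1 hpr).not_gt (by omega)
        split_ifs <;> omega
    _ = p / 2 * (q / 2) := by simp

section GaussLemma

variable {h : ℤ} {k : ℕ}

lemma not_natCast_dvd_mul (hco : h.gcd k = 1) {r : ℕ} (hr : 0 < r) (hrk : r < k) :
    ¬ (k : ℤ) ∣ h * r := fun hdvd =>
  have hkr : k ∣ r := Int.natCast_dvd_natCast.mp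
    (Int.dvd_of_dvd_mul_right_of_gcd_one hdvd (by rwa [Int.gcd_comm]))
  (Nat.le_of_dvd hr hkr).not_gt hrk

lemma neg_mul_emod (hco : h.gcd k = 1) {r : ℕ} (hr : 0 < r) (hrk : r < k) :
    -(h * r) % k = k - h * r % k := by
  rw [Int.neg_emod, if_neg (not_natCast_dvd_mul hco hr hrk), Int.natAbs_natCast]

lemma mul_sub_emod (hco : h.gcd k = 1) {r : ℕ} (hr : 0 < r) (hrk : r < k) :
    h * ((k - r : ℕ) : ℤ) % k = k - h * r % k := by
  rw [Nat.cast_sub hrk.le, show h * ((k : ℤ) - r) = -(h * r) + k * h by ring,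
    Int.add_mul_emod_self_left, neg_mul_emod hco hr hrk]

lemma gaussCount_neg_add (hk : Odd k) (hco : h.gcd k = 1) :
    gaussCount (-h) k + gaussCount h k = k / 2 := by
  have hk2 := Nat.odd_iff.mp hk
  have flip : ∀ r ∈ Icc 1 (k / 2),
      (k : ℤ) < 2 * (-h * r % k) ↔ ¬ (k : ℤ) < 2 * (h * r % k) := by
    intro r hr
    rw [mem_Icc] at hr
    rw [neg_mul, neg_mul_emod hco hr.1 (by omega)]
    have := Int.emod_lt_of_pos (h * r) (by omega : (0 : ℤ) < k)
    omega
  rw [gaussCount, gaussCount, filter_congr flip, add_comm, card_filter_add_card_filter_not,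
    Nat.card_Icc, Nat.add_sub_cancel]

lemma injOn_natAbs_valMinAbs_mul {a : ZMod k} (ha : IsUnit a) :
    Set.InjOn (fun r : ℕ => (a * r).valMinAbs.natAbs) (Icc 1 (k / 2)) := by
  intro r hr s hs hrs
  simp only [coe_Icc, Set.mem_Icc] at hr hs
  rcases ZMod.natAbs_valMinAbs_eq_natAbs_valMinAbs.mp hrs with he | he
  · have := (ZMod.natCast_eq_natCast_iff' _ _ _).mp (ha.mul_left_cancel he)
    rwa [Nat.mod_eq_of_lt (by omega), Nat.mod_eq_of_lt (by omega)] at this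
  · rw [← mul_neg] at he
    have hk : k ∣ r + s := (ZMod.natCast_eq_zero_iff _ _).mp <| by
      push_cast; rw [ha.mul_left_cancel he, neg_add_cancel]
    have := Nat.le_of_dvd (by omega) hk
    omega

lemma image_natAbs_valMinAbs_mul [NeZero k] {a : ZMod k} (ha : IsUnit a) :
    (Icc 1 (k / 2)).image (fun r : ℕ => (a * r).valMinAbs.natAbs) = Icc 1 (k / 2) := by
  refine eq_of_subset_of_card_le (fun x hx => ?_)
    (card_image_of_injOn (injOn_natAbs_valMinAbs_mul ha)).ge
  obtain ⟨r, hr, rfl⟩ := mem_image.mp hx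
  have hk := Nat.div_lt_self (Nat.pos_of_neZero k) one_lt_two
  simp only [mem_Icc] at hr ⊢
  refine ⟨Nat.one_le_iff_ne_zero.mpr ?_, ZMod.natAbs_valMinAbs_le _⟩
  rw [Int.natAbs_ne_zero, Ne, ZMod.valMinAbs_eq_zero, ha.mul_right_eq_zero,
    ZMod.natCast_eq_zero_iff]
  exact fun hkr => (Nat.le_of_dvd (by omega) hkr).not_gt (by omega)

lemma sum_min_mul_emod [NeZero k] (hco : h.gcd k = 1) :
    ∑ r ∈ Icc 1 (k / 2), min (h * r % k) (k - h * r % k) = ∑ r ∈ Icc 1 (k / 2), (r : ℤ) := by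
  have hunit : IsUnit (h : ZMod k) := (ZMod.coe_int_isUnit_iff_isCoprime h k).mpr
    (Int.isCoprime_iff_gcd_eq_one.mpr (by rwa [Int.gcd_comm]))
  have fold : ∀ r : ℕ, min (h * r % k) (k - h * r % k)
      = (((h : ZMod k) * r).valMinAbs.natAbs : ℤ) := by
    intro r
    have hval : ((((h : ZMod k) * r)).val : ℤ) = h * r % k := by
      rw [← ZMod.val_intCast]; push_cast; rfl
    rw [ZMod.valMinAbs_natAbs_eq_min, Nat.cast_min, Nat.cast_sub (ZMod.val_lt _).le, hval]
  simp_rw [fold]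
  rw [← sum_image (f := fun x : ℕ => (x : ℤ)) (injOn_natAbs_valMinAbs_mul hunit),
    image_natAbs_valMinAbs_mul hunit]

lemma gaussCount_modEq_sum_ediv (hk : Odd k) (hh : Odd h) (hco : h.gcd k = 1) :
    (gaussCount h k : ℤ) ≡ ∑ r ∈ Icc 1 (k / 2), h * r / k [ZMOD 2] := by
  have : NeZero k := ⟨hk.pos.ne'⟩
  have hk1 : ((k : ℤ) : ZMod 2) = 1 := by exact_mod_cast ZMod.natCast_eq_one_iff_odd.mpr hk
  have hh1 : (h : ZMod 2) = 1 := ZMod.intCast_eq_one_iff_odd.mpr hh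
  have two : (2 : ZMod 2) = 0 := rfl
  -- `hr = k⌊hr/k⌋ + (hr mod k)`, and `hr mod k` is `m = min (hr mod k) (k - hr mod k)` or,
  -- when it lies above `k/2`, `k - m ≡ m + 1`
  have term (r : ℕ) : (r : ZMod 2) = ((h * r / k : ℤ) : ZMod 2)
      + ((min (h * r % k) (k - h * r % k) : ℤ) : ZMod 2)
      + if (k : ℤ) < 2 * (h * (r : ℕ) % k) then 1 else 0 := by
    have hdiv := Int.mul_ediv_add_emod (h * r) k
    split_ifs with hup
    · have key : h * r = k * (h * r / k) + min (h * r % k) (k - h * r % k)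
          + (k - 2 * min (h * r % k) (k - h * r % k)) := by
        rw [min_eq_right (by omega)]; omega
      have := congrArg (Int.cast : ℤ → ZMod 2) key
      push_cast [hh1, hk1] at this
      linear_combination this - ((min (h * r % k) (k - h * r % k) : ℤ) : ZMod 2) * two
    · have key : h * r = k * (h * r / k) + min (h * r % k) (k - h * r % k) := by
        rw [min_eq_left (by omega)]; omega
      have := congrArg (Int.cast : ℤ → ZMod 2) key
      push_cast [hh1, hk1] at this
      linear_combination this
  have hfold := congrArg (Int.cast : ℤ → ZMod 2) (sum_min_mul_emod hco)
  push_cast at hfold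
  refine (ZMod.intCast_eq_intCast_iff _ _ 2).mp ?_
  have hsum := sum_congr rfl fun r (_ : r ∈ Icc 1 (k / 2)) => term r
  rw [sum_add_distrib, sum_add_distrib, hfold, sum_boole] at hsum
  change _ = _ + _ + ((gaussCount h k : ℕ) : ZMod 2) at hsum
  push_cast
  linear_combination hsum + (gaussCount h k : ZMod 2) * two

lemma jacobiSym_natCast_eq_neg_one_pow_gaussCount_of_swap {a : ℕ} (ha : Odd a) (hk : Odd k)
    (hco : a.Coprime k) (hswap : J(k | a) = (-1) ^ gaussCount k a) :
    J(a | k) = (-1) ^ gaussCount a k := by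
  have e1 := gaussCount_modEq_sum_ediv hk (Odd.natCast ha)
    ((Int.gcd_natCast_natCast _ _).trans hco)
  have e2 := gaussCount_modEq_sum_ediv ha (Odd.natCast hk)
    ((Int.gcd_natCast_natCast _ _).trans hco.symm)
  have hpar : gaussCount a k + gaussCount k a ≡ a / 2 * (k / 2) [MOD 2] := by
    rw [← Int.natCast_modEq_iff, mul_comm,
      ← sum_mul_div_add_sum_mul_div_eq_mul_of_coprime hco.symm]
    push_cast
    convert e1.add e2 using 2 <;> exact sum_congr rfl fun r _ => by rw [mul_comm]
  rw [jacobiSym.quadratic_reciprocity ha hk, hswap, ← pow_add]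
  refine neg_one_pow_congr ?_
  simp only [Nat.even_iff, Nat.ModEq] at hpar ⊢
  omega

lemma jacobiSym_neg_eq_neg_one_pow_gaussCount (hk : Odd k) (hco : h.gcd k = 1)
    (H : J(h | k) = (-1) ^ gaussCount h k) : J(-h | k) = (-1) ^ gaussCount (-h) k := by
  rw [jacobiSym.neg _ hk, H, ZMod.χ₄_eq_neg_one_pow (Nat.odd_iff.mp hk), ← pow_add,
    ← gaussCount_neg_add hk hco, add_assoc, pow_add, ← two_mul, pow_mul, neg_one_sq, one_pow,
    mul_one]

theorem jacobiSym_eq_neg_one_pow_gaussCount (hk : Odd k) (hco : h.gcd k = 1) :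
    J(h | k) = (-1) ^ gaussCount h k := by
  induction k using Nat.strong_induction_on generalizing h with
  | _ k ih =>
  obtain rfl | hk1 := eq_or_ne k 1
  · simp [gaussCount]
  have hk0 : (0 : ℤ) < k := by exact_mod_cast hk.pos
  obtain ⟨a, ha⟩ : ∃ a : ℕ, (a : ℤ) = h % k := ⟨_, Int.toNat_of_nonneg (Int.emod_nonneg h hk0.ne')⟩
  have hcoa : a.Coprime k := by
    rw [Nat.Coprime, ← Int.gcd_natCast_natCast, ha, Int.gcd_emod, hco]
  have hak : a < k := by have := Int.emod_lt_of_pos h hk0; omega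
  have ha0 : 0 < a := Nat.pos_of_ne_zero fun h0 => hk1 (by simpa [h0] using hcoa)
  rw [jacobiSym.mod_left, ← gaussCount_emod_left, ← ha]
  rcases Nat.even_or_odd a with hae | hao
  · -- replace the even residue `a` by the odd `k - a ≡ -h`
    have hb : Odd (k - a) := Nat.Odd.sub_even hak.le hk hae
    have hcob : (k - a).Coprime k := (Nat.coprime_self_sub_left hak.le).mpr hcoa
    have hmod : (-((k - a : ℕ) : ℤ)) % k = (a : ℤ) % k := by
      rw [Nat.cast_sub hak.le, neg_sub]; simp
    rw [← jacobiSym.mod_left' hmod, ← gaussCount_emod_left, ← hmod, gaussCount_emod_left]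
    refine jacobiSym_neg_eq_neg_one_pow_gaussCount hk
      ((Int.gcd_natCast_natCast _ _).trans hcob) ?_
    exact jacobiSym_natCast_eq_neg_one_pow_gaussCount_of_swap hb hk hcob
      (ih _ (by omega) hb ((Int.gcd_natCast_natCast _ _).trans hcob.symm))
  · exact jacobiSym_natCast_eq_neg_one_pow_gaussCount_of_swap hao hk hcoa
      (ih a hak hao ((Int.gcd_natCast_natCast _ _).trans hcoa.symm))

end GaussLemma

def upperHalfSum (h : ℤ) (k : ℕ) : ℤ :=
  ∑ r ∈ Icc 1 (k - 1), if (k : ℤ) < 2 * (h * (r : ℕ) % k) then (r : ℤ) else 0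

lemma two_mul_sum_Icc_one (n : ℕ) : 2 * ∑ r ∈ Icc 1 n, r = n * (n + 1) := by
  induction n with
  | zero => rfl
  | succ n ih => rw [sum_Icc_succ_top (by omega), mul_add, ih]; ring

lemma sum_Icc_one_two_mul_eq_sum_add {M : Type*} [AddCommMonoid M] (f : ℕ → M) (K : ℕ) :
    ∑ r ∈ Icc 1 (2 * K), f r = ∑ r ∈ Icc 1 K, (f r + f (2 * K + 1 - r)) := by
  rw [sum_add_distrib, ← Ico_add_one_right_eq_Icc, ← Ico_add_one_right_eq_Icc,
    ← sum_Ico_consecutive _ (by omega : 1 ≤ K + 1) (by omega : K + 1 ≤ 2 * K + 1),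
    sum_Ico_reflect _ _ (by omega)]
  congr 3; omega

lemma two_mul_ediv_of_odd {k : ℕ} (hk : Odd k) (x : ℤ) :
    2 * x / k = 2 * (x / k) + if (k : ℤ) < 2 * (x % k) then 1 else 0 := by
  have hk0 : (0 : ℤ) < k := by exact_mod_cast hk.pos
  have hx := Int.mul_ediv_add_emod x k
  have := Nat.odd_iff.mp hk
  have := Int.emod_nonneg x hk0.ne'
  have := Int.emod_lt_of_pos x hk0
  split_ifs
  · exact ((Int.ediv_emod_unique (r := 2 * (x % k) - k) hk0).mpr
      ⟨by linarith, by omega, by omega⟩).1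
  · exact ((Int.ediv_emod_unique (r := 2 * (x % k)) hk0).mpr ⟨by linarith, by omega, by omega⟩).1

lemma gfun_eq {k : ℕ} (hk : Odd k) (n h : ℤ) :
    gfun n h k = ((12 * upperHalfSum h k - 3 * k * (k - 1) - 24 * n * h : ℤ) : ℚ) := by
  have hk0 : (k : ℚ) ≠ 0 := by exact_mod_cast hk.pos.ne'
  have floor_mul (c : ℤ) (r : ℕ) : ⌊(c : ℚ) * r / k⌋ = c * r / k := by
    rw [← Rat.floor_intCast_div_natCast]; push_cast; rfl
  have term (r : ℕ) :
      24 * (k : ℚ) * ((r : ℚ) / k * ((h : ℚ) * r / k - ⌊(h : ℚ) * r / k⌋ - 1 / 2))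
        - 12 * k * ((r : ℚ) / k
          * (((2 * h : ℤ) : ℚ) * r / k - ⌊((2 * h : ℤ) : ℚ) * r / k⌋ - 1 / 2))
      = 12 * ((if (k : ℤ) < 2 * (h * r % k) then (r : ℤ) else 0 : ℤ) : ℚ) - 6 * r := by
    rw [floor_mul, floor_mul, mul_assoc 2 h, two_mul_ediv_of_odd hk]
    split_ifs <;> push_cast <;> field_simp <;> ring
  have gauss : ∑ r ∈ Icc 1 (k - 1), (r : ℚ) = k * (k - 1) / 2 := by
    have := two_mul_sum_Icc_one (k - 1)
    rw [Nat.sub_add_cancel hk.pos] at this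
    rw [← Nat.cast_sum, eq_div_iff two_ne_zero, mul_comm, ← Nat.cast_two, ← Nat.cast_mul, this]
    push_cast [Nat.cast_sub hk.pos]
    ring
  rw [gfun, dedekindSum, dedekindSum, mul_sum, mul_sum, ← sum_sub_distrib,
    sum_congr rfl fun r _ => term r, sum_sub_distrib, ← mul_sum, ← mul_sum, gauss, upperHalfSum]
  push_cast
  ring

lemma upperHalfSum_modEq {h : ℤ} {k : ℕ} (hk : Odd k) (hco : h.gcd k = 1) :
    upperHalfSum h k ≡ ∑ r ∈ Icc 1 (k / 2), ((r : ℤ) + 1) + gaussCount h k [ZMOD 2] := by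
  have hk1 : ((k : ℤ) : ZMod 2) = 1 := by exact_mod_cast ZMod.natCast_eq_one_iff_odd.mpr hk
  have two : (2 : ZMod 2) = 0 := rfl
  obtain ⟨K, hK⟩ := hk
  have pair : ∀ r ∈ Icc 1 K,
      (((if (k : ℤ) < 2 * (h * (r : ℕ) % k) then (r : ℤ) else 0)
        + (if (k : ℤ) < 2 * (h * ((k - r : ℕ) : ℤ) % k) then ((k - r : ℕ) : ℤ) else 0) : ℤ)
        : ZMod 2)
      = ((r : ℤ) + 1 + if (k : ℤ) < 2 * (h * (r : ℕ) % k) then 1 else 0 : ℤ) := by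
    intro r hr
    obtain ⟨hr1, hr2⟩ := mem_Icc.mp hr
    have hlt := Int.emod_lt_of_pos (h * r) (by omega : (0 : ℤ) < k)
    rw [mul_sub_emod hco hr1 (by omega), Nat.cast_sub (by omega)]
    split_ifs <;> first | omega | (push_cast [hk1]; ring_nf; reduce_mod_char)
  refine (ZMod.intCast_eq_intCast_iff _ _ 2).mp ?_
  rw [upperHalfSum, gaussCount, ← sum_boole,
    show k - 1 = 2 * K by omega, show k / 2 = K by omega, sum_Icc_one_two_mul_eq_sum_add, ← hK]
  rw [← sum_add_distrib, Int.cast_sum, Int.cast_sum]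
  exact sum_congr rfl pair

lemma twelve_mul_sub_modEq_eight {k μ : ℕ} (hk : Odd k) {T : ℤ}
    (hT : T ≡ ∑ r ∈ Icc 1 (k / 2), ((r : ℤ) + 1) + μ [ZMOD 2]) :
    12 * T - 3 * k * (k - 1) ≡ -6 * k * (-1) ^ μ + 3 * k * (1 + (-1) ^ (k / 2)) [ZMOD 8] := by
  obtain ⟨K, rfl⟩ := hk
  rw [show (2 * K + 1) / 2 = K by omega] at hT ⊢
  have hsum : 2 * ∑ r ∈ Icc 1 K, ((r : ℤ) + 1) = K * (K + 3) := by
    have := congrArg (Nat.cast : ℕ → ℤ) (two_mul_sum_Icc_one K)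
    push_cast at this
    rw [sum_add_distrib, sum_const, Nat.card_Icc]
    push_cast
    linear_combination this
  obtain ⟨t, ht⟩ := hT.dvd
  have h12 : 12 * T = 6 * K * (K + 3) + 12 * μ - 24 * t := by
    linear_combination -12 * ht + 6 * hsum
  refine (ZMod.intCast_eq_intCast_iff _ _ 8).mp ?_
  rw [h12]
  rcases Nat.even_or_odd' μ with ⟨j, rfl | rfl⟩ <;>
    rcases Nat.even_or_odd' K with ⟨i, rfl | rfl⟩ <;>
    simp only [pow_succ, pow_mul] <;> push_cast <;> ring_nf <;> reduce_mod_char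

theorem gfun_mod_eight_general (k : ℕ) (hodd : Odd k) (n h : ℤ) (hco : Int.gcd h k = 1) :
    ∃ m : ℤ, gfun n h k = (m : ℚ) ∧
      m ≡ -6 * k * jacobiSym h k + 3 * k * (1 + jacobiSym (-1) k) [ZMOD 8] := by
  refine ⟨_, gfun_eq hodd n h, ?_⟩
  rw [jacobiSym_eq_neg_one_pow_gaussCount hodd hco, jacobiSym.at_neg_one hodd,
    ZMod.χ₄_eq_neg_one_pow (Nat.odd_iff.mp hodd)]
  have h24 : 24 * n * h ≡ 0 [ZMOD 8] := Int.modEq_zero_iff_dvd.mpr ⟨3 * n * h, by ring⟩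
  simpa using (twelve_mul_sub_modEq_eight hodd (upperHalfSum_modEq hodd hco)).sub h24

/-- `g_n(h,k)` is an integer congruent to `-6k (h|k) + 3k (1 + (-1|k))` modulo `8`,
where `(·|k)` denotes the Jacobi symbol. -/
theorem gfun_mod_eight (k : ℕ) (hk : 0 < k) (hodd : Odd k) (n h : ℤ)
    (h0 : 0 ≤ h) (hlt : h < k) (hco : Int.gcd h k = 1) :
    ∃ m : ℤ, gfun n h k = (m : ℚ) ∧
      m ≡ -6 * k * jacobiSym h k + 3 * k * (1 + jacobiSym (-1) k) [ZMOD 8] :=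
  gfun_mod_eight_general k hodd n h hco
end

section
/- Let k be an odd positive integer, let n be an integer, and let h be an integer with 0 ≤ h < k and gcd(h,k) = 1. Then the integer g_n(h,k) satisfies g_n(h,k) ≡ 24·t_n(h) (mod 3k), where t_n(h) is any integer with t_n(h) ≡ −nh + (16h)^{−1} (mod k), with (16h)^{−1} an inverse of 16h modulo k. -/
open Finset

theorem Int.two_mul_fract_sub_fract_two_mul {R : Type*} [CommRing R] [LinearOrder R]
    [IsStrictOrderedRing R] [FloorRing R] (x : R) :
    2 * Int.fract x - Int.fract (2 * x) = if 1 ≤ 2 * Int.fract x then 1 else 0 := by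
  have hshift : Int.fract (2 * x) = Int.fract (2 * Int.fract x) := by
    rw [← Int.fract_add_intCast (2 * Int.fract x) (2 * ⌊x⌋)]
    congr 1
    push_cast
    rw [← Int.self_sub_floor]
    ring
  have h0 := Int.fract_nonneg x
  have h1 := Int.fract_lt_one x
  rw [hshift]
  split_ifs with hx
  · rw [(Int.fract_eq_iff (a := 2 * Int.fract x) (b := 2 * Int.fract x - 1)).2
      ⟨by linarith, by linarith, 1, by simp⟩]
    ring
  · rw [(Int.fract_eq_self (a := 2 * Int.fract x)).2 ⟨by linarith, by linarith⟩]
    ring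

theorem Int.fract_intCast_div_natCast_eq_val {K : Type*} [Field K] [LinearOrder K]
    [IsStrictOrderedRing K] [FloorRing K] (a : ℤ) (k : ℕ) [NeZero k] :
    Int.fract ((a : K) / k) = ((a : ZMod k).val : K) / k := by
  rw [Int.fract_div_intCast_eq_div_intCast_mod, ← ZMod.val_intCast, Int.cast_natCast]

theorem ZMod.sum_eq_sum_range_natCast {M : Type*} [AddCommMonoid M] (k : ℕ) [NeZero k]
    (f : ZMod k → M) : ∑ x : ZMod k, f x = ∑ r ∈ range k, f r :=
  Finset.sum_nbij' ZMod.val Nat.cast (fun x _ => mem_range.2 x.val_lt) (fun _ _ => mem_univ _)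
    (fun x _ => ZMod.natCast_zmod_val x) (fun _ hr => ZMod.val_cast_of_lt (mem_range.1 hr))
    (fun x _ => by rw [ZMod.natCast_zmod_val])

theorem dedekindSum_eq_sum_range (h : ℤ) (k : ℕ) :
    dedekindSum h k =
      ∑ r ∈ range k, ((r : ℚ) / k) * (Int.fract ((h : ℚ) * r / k) - 1 / 2) := by
  rw [dedekindSum]
  refine Finset.sum_subset (fun r hr => ?_) (fun r hr hr' => ?_)
  · simp only [mem_Icc, mem_range] at hr ⊢
    omega
  · obtain rfl : r = 0 := by simp only [mem_Icc, mem_range] at hr hr'; omega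
    simp

def upperResidueSum (h : ℤ) (k : ℕ) : ℕ :=
  ∑ r ∈ range k, if k ≤ 2 * (h * r : ZMod k).val then r else 0

theorem dedekindSum_sub_dedekindSum_two_mul (h : ℤ) (k : ℕ) [NeZero k] :
    24 * k * dedekindSum h k - 12 * k * dedekindSum (2 * h) k
      = 12 * upperResidueSum h k - 3 * k * (k - 1) := by
  have hk : (k : ℚ) ≠ 0 := NeZero.ne _
  have hgauss : (∑ r ∈ range k, (r : ℚ)) * 2 = k * (k - 1) := by
    have := congrArg (Nat.cast : ℕ → ℚ) (sum_range_id_mul_two k)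
    push_cast [Nat.cast_sub (Nat.one_le_iff_ne_zero.2 (NeZero.ne k))] at this
    exact this
  have hterm : ∀ r : ℕ, 24 * k * ((r : ℚ) / k) * (Int.fract ((h : ℚ) * r / k) - 1 / 2)
      - 12 * k * ((r : ℚ) / k) * (Int.fract (((2 * h : ℤ) : ℚ) * r / k) - 1 / 2)
      = 12 * (if k ≤ 2 * (h * r : ZMod k).val then (r : ℚ) else 0) - 6 * r := by
    intro r
    have hcond : 1 ≤ 2 * Int.fract ((h : ℚ) * r / k) ↔ k ≤ 2 * (h * r : ZMod k).val := by
      rw [show (h : ℚ) * r / k = ((h * r : ℤ) : ℚ) / k by push_cast; ring,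
        Int.fract_intCast_div_natCast_eq_val, mul_div_assoc', le_div_iff₀ (by positivity),
        one_mul]
      norm_cast
    have key := Int.two_mul_fract_sub_fract_two_mul ((h : ℚ) * r / k)
    simp only [hcond] at key
    calc _ = 12 * r * (2 * Int.fract ((h : ℚ) * r / k) - Int.fract (2 * ((h : ℚ) * r / k)))
          - 6 * r := by push_cast; field_simp; ring_nf
      _ = _ := by rw [key]; split_ifs <;> ring
  simp only [dedekindSum_eq_sum_range, mul_sum, ← mul_assoc, ← sum_sub_distrib, hterm]
  rw [sum_sub_distrib, ← mul_sum, ← mul_sum, upperResidueSum]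
  push_cast
  linear_combination (-3 : ℚ) * hgauss

theorem intCast_mul_upperResidueSum {h : ℤ} {k : ℕ} [NeZero k] (hh : IsUnit (h : ZMod k)) :
    (h : ZMod k) * upperResidueSum h k = upperResidueSum 1 k := by
  set G : ZMod k → ZMod k := fun y => if k ≤ 2 * y.val then y else 0
  calc (h : ZMod k) * upperResidueSum h k = ∑ x : ZMod k, G (h * x) := by
        rw [ZMod.sum_eq_sum_range_natCast, upperResidueSum]
        push_cast
        simp [G, mul_sum, mul_ite]
    _ = ∑ y : ZMod k, G y := Equiv.sum_comp (Units.mulLeft hh.unit) G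
    _ = upperResidueSum 1 k := by
        rw [ZMod.sum_eq_sum_range_natCast, upperResidueSum]
        push_cast
        simp [G]

theorem eight_mul_upperResidueSum_one (j : ℕ) :
    8 * upperResidueSum 1 (2 * j + 1) = 4 * j * (3 * j + 1) := by
  have hupper : upperResidueSum 1 (2 * j + 1) = ∑ r ∈ Ico (j + 1) (2 * j + 1), r := by
    rw [← Nat.zero_max (j + 1), ← Ico_filter_le, sum_filter, ← range_eq_Ico, upperResidueSum]
    refine sum_congr rfl fun r hr => ?_
    rw [Int.cast_one, one_mul, ZMod.val_cast_of_lt (mem_range.1 hr)]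
    split_ifs <;> omega
  have hsplit := sum_range_add_sum_Ico (fun r => r) (show j + 1 ≤ 2 * j + 1 by omega)
  have g1 := sum_range_id_mul_two (j + 1)
  have g2 := sum_range_id_mul_two (2 * j + 1)
  simp only [Nat.add_sub_cancel] at g1 g2 hsplit
  rw [hupper]
  nlinarith

theorem eight_mul_upperResidueSum_one_eq_one {k : ℕ} (hk : Odd k) :
    (8 * upperResidueSum 1 k : ZMod k) = 1 := by
  obtain ⟨j, rfl⟩ := hk
  have hk : ((2 * j + 1 : ℕ) : ZMod (2 * j + 1)) = 0 := ZMod.natCast_self _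
  have h8 := congrArg (Nat.cast : ℕ → ZMod (2 * j + 1)) (eight_mul_upperResidueSum_one j)
  push_cast at hk h8 ⊢
  rw [h8]
  linear_combination (6 * (j : ZMod (2 * j + 1)) - 1) * hk

theorem gfun_mod_three_k_general (k : ℕ) (hodd : Odd k) (n h : ℤ)
    (hco : Int.gcd h k = 1)
    (t : ℤ) (ht : 16 * h * t ≡ -16 * n * h ^ 2 + 1 [ZMOD (k : ℤ)]) :
    ∃ m : ℤ, gfun n h k = (m : ℚ) ∧ m ≡ 24 * t [ZMOD (3 * (k : ℤ))] := by
  have : NeZero k := ⟨hodd.pos.ne'⟩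
  set T := upperResidueSum h k
  refine ⟨12 * T - 3 * k * (k - 1) - 24 * n * h, ?_, ?_⟩
  · rw [gfun, dedekindSum_sub_dedekindSum_two_mul]
    push_cast
    ring
  have hh : IsUnit (h : ZMod k) := (ZMod.coe_int_isUnit_iff_isCoprime h k).2
    (Int.isCoprime_iff_gcd_eq_one.2 (by rwa [Int.gcd_comm]))
  have h2 : IsUnit (2 : ZMod k) := by
    simpa using (ZMod.isUnit_iff_coprime 2 k).2 (Nat.coprime_two_left.2 hodd)
  have hdvd : (k : ℤ) ∣ 4 * T - 8 * n * h - 8 * t := by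
    rw [← ZMod.intCast_zmod_eq_zero_iff_dvd, ← (h2.mul hh).mul_right_eq_zero]
    have ht' := (ZMod.intCast_eq_intCast_iff _ _ _).2 ht
    push_cast at ht' ⊢
    linear_combination 8 * intCast_mul_upperResidueSum hh
      + eight_mul_upperResidueSum_one_eq_one hodd - ht'
  obtain ⟨c, hc⟩ := hdvd
  exact (Int.modEq_iff_dvd.2 ⟨c - (k - 1), by linear_combination 3 * hc⟩).symm

/-- `g_n(h,k) ≡ 24 t (mod 3k)` for every integer `t` with
`16h·t ≡ -16nh² + 1 (mod k)`, i.e. `t ≡ -nh + (16h)⁻¹ (mod k)`. -/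
theorem gfun_mod_three_k (k : ℕ) (hk : 0 < k) (hodd : Odd k) (n h : ℤ)
    (h0 : 0 ≤ h) (hlt : h < k) (hco : Int.gcd h k = 1)
    (t : ℤ) (ht : 16 * h * t ≡ -16 * n * h ^ 2 + 1 [ZMOD (k : ℤ)]) :
    ∃ m : ℤ, gfun n h k = (m : ℚ) ∧ m ≡ 24 * t [ZMOD (3 * (k : ℤ))] :=
  gfun_mod_three_k_general k hodd n h hco t ht
end
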